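/- Every periodic billiard trajectory inside an ellipse with an odd number of bounces has an ellipse (not a hyperbola) as its caustic. Concretely: if a closed polygonal billiard trajectory inscribed in the ellipse x²/a² + y²/b² = 1 (a > b > 0) has all its segments tangent to a confocal hyperbola x²/(a²−λ) + y²/(b²−λ) = 1 with b² < λ < a², then the number of its vertices is even. -/

import Mathlib

noncomputable section

abbrev Pt := EuclideanSpace ℝ (Fin 2)

set_option maxHeartbeats 1000000 in
private lemma key_lemma (a b A B X Y x1 y1 x2 y2 : ℝ) (ha : 0 < a) (hb : 0 < b)
    (hA : 0 < A) (hAa : A < a ^ 2) (hB : B < 0)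
    (hQ : X ^ 2 * B + Y ^ 2 * A = A * B)
    (h1 : x1 * X * B + y1 * Y * A = A * B)
    (h2 : x2 * X * B + y2 * Y * A = A * B)
    (e1 : x1 ^ 2 * b ^ 2 + y1 ^ 2 * a ^ 2 = a ^ 2 * b ^ 2)
    (e2 : x2 ^ 2 * b ^ 2 + y2 ^ 2 * a ^ 2 = a ^ 2 * b ^ 2)
    (hne : x1 ≠ x2 ∨ y1 ≠ y2) : y1 * y2 < 0 := by
  have hX : X ≠ 0 := by
    rintro rfl
    nlinarith [sq_nonneg Y, mul_nonneg (sq_nonneg Y) hA.le, mul_neg_of_pos_of_neg hA hB]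
  have hX2pos : 0 < X ^ 2 := (sq_nonneg X).lt_of_ne' (pow_ne_zero 2 hX)
  have hX2 : A ≤ X ^ 2 := by
    nlinarith [mul_nonneg (sq_nonneg Y) hA.le]
  set α := A ^ 2 * b ^ 2 * Y ^ 2 + a ^ 2 * X ^ 2 * B ^ 2 with hαdef
  set β := -2 * A ^ 2 * b ^ 2 * B * Y with hβdef
  set γ := A ^ 2 * b ^ 2 * B ^ 2 - a ^ 2 * b ^ 2 * X ^ 2 * B ^ 2 with hγdef
  have hB2 : 0 < B ^ 2 := (sq_nonneg B).lt_of_ne' (pow_ne_zero 2 hB.ne)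
  have hα : 0 < α := by
    have : 0 < a ^ 2 * X ^ 2 * B ^ 2 := by positivity
    nlinarith [mul_nonneg (mul_nonneg (sq_nonneg A) (sq_nonneg b)) (sq_nonneg Y)]
  have hγ : γ < 0 := by
    have hb2 : 0 < b ^ 2 := by positivity
    have h4 : A ^ 2 < a ^ 2 * X ^ 2 := by
      nlinarith [mul_le_mul_of_nonneg_left hX2 (pow_pos ha 2).le]
    nlinarith [mul_lt_mul_of_pos_left h4 (mul_pos hb2 hB2)]
  have hq1 : α * y1 ^ 2 + β * y1 + γ = 0 := by
    linear_combination (-(b ^ 2 * (A * B - y1 * Y * A + x1 * X * B))) * h1 + (X ^ 2 * B ^ 2) * e1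
  have hq2 : α * y2 ^ 2 + β * y2 + γ = 0 := by
    linear_combination (-(b ^ 2 * (A * B - y2 * Y * A + x2 * X * B))) * h2 + (X ^ 2 * B ^ 2) * e2
  have hy12 : y1 ≠ y2 := by
    intro h
    subst h
    have h3 : (x1 - x2) * (X * B) = 0 := by linear_combination h1 - h2
    have hXB : X * B ≠ 0 := mul_ne_zero hX hB.ne
    have hx : x1 = x2 := by
      have := (mul_eq_zero.mp h3).resolve_right hXB
      linarith
    rcases hne with h | h
    · exact h hx
    · exact h rfl
  have hsum : α * (y1 + y2) + β = 0 := by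
    have hd : (y1 - y2) * (α * (y1 + y2) + β) = 0 := by linear_combination hq1 - hq2
    exact (mul_eq_zero.mp hd).resolve_left (sub_ne_zero.mpr hy12)
  have hprod : α * (y1 * y2) = γ := by linear_combination y1 * hsum - hq1
  by_contra hc
  push_neg at hc
  nlinarith [mul_nonneg hα.le hc]

/-- A closed polygonal billiard trajectory inscribed in the ellipse
`x²/a² + y²/b² = 1` all of whose segments are tangent to the confocal hyperbola
`x²/(a²−λ) + y²/(b²−λ) = 1` (with `b² < λ < a²`) has an even number of vertices;
hence an odd-periodic trajectory has an ellipse as caustic. -/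
theorem odd_period_trajectory_has_ellipse_caustic
    (a b lam : ℝ) (hb : 0 < b) (hab : b < a)
    (hlam1 : b ^ 2 < lam) (hlam2 : lam < a ^ 2)
    (n : ℕ) (hn : 0 < n)
    (P : ZMod n → Pt)
    (honE : ∀ i : ZMod n, (P i 0) ^ 2 / a ^ 2 + (P i 1) ^ 2 / b ^ 2 = 1)
    (hne : ∀ i : ZMod n, P i ≠ P (i + 1))
    (htan : ∀ i : ZMod n, ∃ Q : Pt,
      (Q 0) ^ 2 / (a ^ 2 - lam) + (Q 1) ^ 2 / (b ^ 2 - lam) = 1 ∧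
      (P i 0) * (Q 0) / (a ^ 2 - lam) + (P i 1) * (Q 1) / (b ^ 2 - lam) = 1 ∧
      (P (i + 1) 0) * (Q 0) / (a ^ 2 - lam) + (P (i + 1) 1) * (Q 1) / (b ^ 2 - lam) = 1) :
    Even n := by
  haveI : NeZero n := ⟨hn.ne'⟩
  have ha : 0 < a := hb.trans hab
  have hA : 0 < a ^ 2 - lam := by linarith
  have hAa : a ^ 2 - lam < a ^ 2 := by nlinarith [pow_pos hb 2]
  have hB : b ^ 2 - lam < 0 := by linarith
  have hAne : a ^ 2 - lam ≠ 0 := hA.ne'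
  have hBne : b ^ 2 - lam ≠ 0 := hB.ne
  have hane : (a : ℝ) ^ 2 ≠ 0 := (pow_pos ha 2).ne'
  have hbne : (b : ℝ) ^ 2 ≠ 0 := (pow_pos hb 2).ne'
  -- cleared ellipse equations
  have honE' : ∀ i : ZMod n,
      (P i 0) ^ 2 * b ^ 2 + (P i 1) ^ 2 * a ^ 2 = a ^ 2 * b ^ 2 := by
    intro i
    have h := honE i
    field_simp at h
    linarith
  -- key sign fact
  have hy : ∀ i : ZMod n, P i 1 * P (i + 1) 1 < 0 := by
    intro i
    obtain ⟨Q, hQ, h1, h2⟩ := htan i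
    have hQc : (Q 0) ^ 2 * (b ^ 2 - lam) + (Q 1) ^ 2 * (a ^ 2 - lam)
        = (a ^ 2 - lam) * (b ^ 2 - lam) := by
      field_simp at hQ
      linarith
    have h1c : (P i 0) * (Q 0) * (b ^ 2 - lam) + (P i 1) * (Q 1) * (a ^ 2 - lam)
        = (a ^ 2 - lam) * (b ^ 2 - lam) := by
      field_simp at h1
      linarith
    have h2c : (P (i + 1) 0) * (Q 0) * (b ^ 2 - lam) + (P (i + 1) 1) * (Q 1) * (a ^ 2 - lam)
        = (a ^ 2 - lam) * (b ^ 2 - lam) := by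
      field_simp at h2
      linarith
    have hnexy : P i 0 ≠ P (i + 1) 0 ∨ P i 1 ≠ P (i + 1) 1 := by
      by_contra hc
      push_neg at hc
      exact hne i (PiLp.ext fun j => by fin_cases j <;> simp [hc.1, hc.2])
    exact key_lemma a b (a ^ 2 - lam) (b ^ 2 - lam) (Q 0) (Q 1)
      (P i 0) (P i 1) (P (i + 1) 0) (P (i + 1) 1) ha hb hA hAa hB
      hQc h1c h2c (honE' i) (honE' (i + 1)) hnexy
  -- parity argument
  by_contra hodd
  rw [Nat.not_even_iff_odd] at hodd
  set y : ZMod n → ℝ := fun i => P i 1 with hydef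
  have hprodsq : ∏ i : ZMod n, (y i * y (i + 1)) = (∏ i : ZMod n, y i) ^ 2 := by
    rw [Finset.prod_mul_distrib, sq]
    congr 1
    exact Equiv.prod_comp (Equiv.addRight (1 : ZMod n)) y
  have hneg : ∏ i : ZMod n, (y i * y (i + 1)) < 0 := by
    have hcard : Fintype.card (ZMod n) = n := ZMod.card n
    calc ∏ i : ZMod n, (y i * y (i + 1))
        = ∏ i : ZMod n, (-1 : ℝ) * -(y i * y (i + 1)) := by
          apply Finset.prod_congr rfl; intros; ring
      _ = (-1) ^ n * ∏ i : ZMod n, -(y i * y (i + 1)) := by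
          rw [Finset.prod_mul_distrib, Finset.prod_const, Finset.card_univ, hcard]
      _ < 0 := by
          rw [hodd.neg_one_pow]
          have hpos : 0 < ∏ i : ZMod n, -(y i * y (i + 1)) :=
            Finset.prod_pos fun i _ => by have := hy i; simp only [hydef]; linarith
          linarith
  rw [hprodsq] at hneg
  exact absurd hneg (not_lt.mpr (sq_nonneg _))
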